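/- Let η ∈ C_c^∞(ℝ^d;ℝ^d), let Φ be the flow of η, and set A(t,x) := det(D_x Φ_t(x)) · (D_x Φ_t(x))^{-1} (D_x Φ_t(x))^{-T}. Then for every x ∈ ℝ^d one has ∂²_t A(0,x) = 2 δ²A(x), where δ²A := (Dη)(Dη)^T + ½((Dη)^T)² + ½(Dη)² − ½ (η·∇)[(Dη)^T + Dη] − ((Dη)^T + Dη) div η + I · ( (div η)² + η·∇(div η) )/2, and where (η·∇)M denotes the entrywise directional derivative Σ_k η_k ∂_k M of a matrix-valued field M and I is the d×d identity matrix. -/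

import Mathlib

open MeasureTheory Matrix
open scoped RealInnerProductSpace

/-- The divergence of a vector field on `ℝ^d`: the trace of its Jacobian. -/
noncomputable def vdiv {d : ℕ} (η : EuclideanSpace ℝ (Fin d) → EuclideanSpace ℝ (Fin d))
    (x : EuclideanSpace ℝ (Fin d)) : ℝ :=
  LinearMap.trace ℝ (EuclideanSpace ℝ (Fin d)) (fderiv ℝ η x).toLinearMap

/-- The Jacobian matrix (w.r.t. the standard basis) of a map `ℝ^d → ℝ^d` at a point. -/
noncomputable def jacMatrix {d : ℕ}
    (Φ : EuclideanSpace ℝ (Fin d) → EuclideanSpace ℝ (Fin d))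
    (x : EuclideanSpace ℝ (Fin d)) : Matrix (Fin d) (Fin d) ℝ :=
  LinearMap.toMatrix (EuclideanSpace.basisFun (Fin d) ℝ).toBasis
    (EuclideanSpace.basisFun (Fin d) ℝ).toBasis (fderiv ℝ Φ x).toLinearMap

/-- The entrywise directional derivative `(η·∇)M = Σ_k η_k ∂_k M` of a matrix-valued
field `M` along the vector field `η`. -/
noncomputable def dirDerivMat {d : ℕ}
    (η : EuclideanSpace ℝ (Fin d) → EuclideanSpace ℝ (Fin d))
    (M : EuclideanSpace ℝ (Fin d) → Matrix (Fin d) (Fin d) ℝ)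
    (x : EuclideanSpace ℝ (Fin d)) : Matrix (Fin d) (Fin d) ℝ :=
  Matrix.of fun i j => fderiv ℝ (fun y => M y i j) x (η x)

/-- The matrix `δ²A` from the second variation of the one-phase functional. -/
noncomputable def delta2A {d : ℕ}
    (η : EuclideanSpace ℝ (Fin d) → EuclideanSpace ℝ (Fin d))
    (x : EuclideanSpace ℝ (Fin d)) : Matrix (Fin d) (Fin d) ℝ :=
  jacMatrix η x * (jacMatrix η x)ᵀ
    + (1 / 2 : ℝ) • ((jacMatrix η x)ᵀ * (jacMatrix η x)ᵀ)
    + (1 / 2 : ℝ) • (jacMatrix η x * jacMatrix η x)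
    - (1 / 2 : ℝ) • dirDerivMat η (fun y => (jacMatrix η y)ᵀ + jacMatrix η y) x
    - vdiv η x • ((jacMatrix η x)ᵀ + jacMatrix η x)
    + (((vdiv η x) ^ 2 + ⟪η x, gradient (vdiv η) x⟫) / 2) •
        (1 : Matrix (Fin d) (Fin d) ℝ)

/-!
Write `m t = D_x Φ_t(x)` and `B t = Dη(Φ_t x)`. Differentiating the flow equation in `x`
(symmetry of second derivatives) gives the variational equation `m' = B m`, hence
`(det m)' = tr B · det m` (Jacobi) and `(m⁻¹)' = -m⁻¹ B`. Near `t = 0`, where `m` is invertible,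
this gives `A' = det m · (tr B · m⁻¹ m⁻ᵀ - m⁻¹ (B + Bᵀ) m⁻ᵀ)`. Differentiating once more at
`t = 0`, where `m = 1`, `B = Dη`, `B' = (η·∇) Dη` and `tr B' = η·∇ div η`, yields `2 δ²A`.
-/

open Filter Topology

section MatrixCalculus

variable {𝕜 : Type*} [NontriviallyNormedField 𝕜]

-- Mathlib puts no global norm on matrices, so matrix-valued curves are differentiated entrywise.
def HasMatDerivAt {m n : Type*} (F : 𝕜 → Matrix m n 𝕜) (F' : Matrix m n 𝕜) (t : 𝕜) : Prop :=
  ∀ i j, HasDerivAt (fun s => F s i j) (F' i j) t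

theorem Matrix.sum_det_updateRow_mul {n : Type*} [Fintype n] [DecidableEq n]
    (B M : Matrix n n 𝕜) : ∑ i, (M.updateRow i ((B * M) i)).det = trace B * M.det := by
  have hrow : ∀ i, (B * M) i = ∑ k, B i k • M k := fun i => by
    ext j; simp [Matrix.mul_apply, Finset.sum_apply]
  simp only [hrow, det_updateRow_sum, trace, diag, smul_eq_mul, Finset.sum_mul]

theorem hasMatDerivAt_const {m n : Type*} (M : Matrix m n 𝕜) (t : 𝕜) :
    HasMatDerivAt (fun _ => M) 0 t :=
  fun i j => hasDerivAt_const t (M i j)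

namespace HasMatDerivAt

variable {l m n : Type*} {t : 𝕜}

section Rectangular

variable {F G : 𝕜 → Matrix m n 𝕜} {F' G' : Matrix m n 𝕜}

theorem unique (hF : HasMatDerivAt F F' t) (hF₂ : HasMatDerivAt F G' t) : F' = G' :=
  Matrix.ext fun i j => (hF i j).unique (hF₂ i j)

theorem congr_of_eventuallyEq (hF : HasMatDerivAt F F' t) (h : G =ᶠ[𝓝 t] F) :
    HasMatDerivAt G F' t :=
  fun i j => (hF i j).congr_of_eventuallyEq (h.mono fun _ hs => by simp only [hs])

theorem add (hF : HasMatDerivAt F F' t) (hG : HasMatDerivAt G G' t) :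
    HasMatDerivAt (fun s => F s + G s) (F' + G') t :=
  fun i j => (hF i j).add (hG i j)

theorem sub (hF : HasMatDerivAt F F' t) (hG : HasMatDerivAt G G' t) :
    HasMatDerivAt (fun s => F s - G s) (F' - G') t :=
  fun i j => (hF i j).sub (hG i j)

theorem transpose (hF : HasMatDerivAt F F' t) : HasMatDerivAt (fun s => (F s)ᵀ) F'ᵀ t :=
  fun i j => hF j i

theorem smul {c : 𝕜 → 𝕜} {c' : 𝕜} (hc : HasDerivAt c c' t) (hF : HasMatDerivAt F F' t) :
    HasMatDerivAt (fun s => c s • F s) (c' • F t + c t • F') t :=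
  fun i j => by
    simpa only [Matrix.add_apply, Matrix.smul_apply, smul_eq_mul] using hc.fun_mul (hF i j)

theorem mul [Fintype n] {H : 𝕜 → Matrix n l 𝕜} {H' : Matrix n l 𝕜} (hF : HasMatDerivAt F F' t)
    (hH : HasMatDerivAt H H' t) :
    HasMatDerivAt (fun s => F s * H s) (F' * H t + F t * H') t := fun i j => by
  simp only [Matrix.mul_apply, Matrix.add_apply, ← Finset.sum_add_distrib]
  exact HasDerivAt.fun_sum fun k _ => (hF i k).mul (hH k j)

end Rectangular

variable [Fintype n] {F : 𝕜 → Matrix n n 𝕜} {F' B : Matrix n n 𝕜}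

theorem hasDerivAt_trace (hF : HasMatDerivAt F F' t) :
    HasDerivAt (fun s => trace (F s)) (trace F') t :=
  HasDerivAt.fun_sum fun i _ => hF i i

variable [DecidableEq n]

theorem hasDerivAt_det (hF : HasMatDerivAt F F' t) :
    HasDerivAt (fun s => (F s).det) (∑ i, ((F t).updateRow i (F' i)).det) t := by
  have hF : HasDerivAt (F := n → n → 𝕜) (fun s => F s) F' t :=
    hasDerivAt_pi.2 fun i => hasDerivAt_pi.2 fun j => hF i j
  let D : ContinuousMultilinearMap 𝕜 (fun _ : n => n → 𝕜) 𝕜 :=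
    { (detRowAlternating : (n → 𝕜) [⋀^n]→ₗ[𝕜] 𝕜).toMultilinearMap with
      cont := continuous_id.matrix_det }
  exact ((D.hasFDerivAt (F t)).comp_hasDerivAt t hF).congr_deriv
    ((D.linearDeriv_apply _ _).trans rfl)

theorem hasDerivAt_det_of_mul (hF : HasMatDerivAt F (B * F t) t) :
    HasDerivAt (fun s => (F s).det) (trace B * (F t).det) t := by
  simpa only [sum_det_updateRow_mul] using hF.hasDerivAt_det

theorem differentiableAt_adjugate (hF : HasMatDerivAt F F' t) (i j : n) :
    DifferentiableAt 𝕜 (fun s => (F s).adjugate i j) t := by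
  have hrow : HasMatDerivAt (fun s => (F s).updateRow j (Pi.single i 1 : n → 𝕜))
      (F'.updateRow j 0) t := fun p q => by
      rcases eq_or_ne p j with rfl | hp
      · simpa using hasDerivAt_const t ((Pi.single i 1 : n → 𝕜) q)
      · simpa [hp] using hF p q
  simp only [adjugate_apply]
  exact hrow.hasDerivAt_det.differentiableAt

-- Differentiability comes from `F⁻¹ = (det F)⁻¹ • adj F`, the value from differentiating
-- `F F⁻¹ = 1`.
theorem inv (hF : HasMatDerivAt F F' t) (hdet : (F t).det ≠ 0) :
    HasMatDerivAt (fun s => (F s)⁻¹) (-((F t)⁻¹ * F' * (F t)⁻¹)) t := by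
  have hdet_near : ∀ᶠ s in 𝓝 t, (F s).det ≠ 0 :=
    hF.hasDerivAt_det.continuousAt.eventually_ne hdet
  have hdiff : ∀ i j, DifferentiableAt 𝕜 (fun s => (F s)⁻¹ i j) t := fun i j => by
    simp only [inv_def, Ring.inverse_eq_inv', Matrix.smul_apply, smul_eq_mul]
    exact (hF.hasDerivAt_det.differentiableAt.inv hdet).mul (hF.differentiableAt_adjugate i j)
  set V : Matrix n n 𝕜 := Matrix.of fun i j => deriv (fun s => (F s)⁻¹ i j) t
  have hV : HasMatDerivAt (fun s => (F s)⁻¹) V t := fun i j => (hdiff i j).hasDerivAt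
  have hprod : F' * (F t)⁻¹ + F t * V = 0 :=
    (hF.mul hV).unique <| (hasMatDerivAt_const 1 t).congr_of_eventuallyEq <|
      hdet_near.mono fun s hs => mul_nonsing_inv _ (isUnit_iff_ne_zero.2 hs)
  have hunit : IsUnit (F t).det := isUnit_iff_ne_zero.2 hdet
  have : V = -((F t)⁻¹ * F' * (F t)⁻¹) := by
    rw [← (F t).nonsing_inv_mul_cancel_left V hunit, eq_neg_of_add_eq_zero_right hprod,
      Matrix.mul_neg, Matrix.mul_assoc]
  exact this ▸ hV

end HasMatDerivAt

variable {n : Type*} [Fintype n] [DecidableEq n]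

theorem HasMatDerivAt.det_smul_inv_mul_inv_transpose {m : 𝕜 → Matrix n n 𝕜} {B : Matrix n n 𝕜}
    {t : 𝕜} (hm : HasMatDerivAt m (B * m t) t) (hdet : (m t).det ≠ 0) :
    HasMatDerivAt (fun s => (m s).det • ((m s)⁻¹ * (m s)⁻¹ᵀ))
      ((m t).det • (trace B • ((m t)⁻¹ * (m t)⁻¹ᵀ) - (m t)⁻¹ * (B + Bᵀ) * (m t)⁻¹ᵀ)) t := by
  have hu : HasMatDerivAt (fun s => (m s)⁻¹) (-((m t)⁻¹ * B)) t := by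
    convert hm.inv hdet using 2
    rw [Matrix.mul_assoc, Matrix.mul_assoc, mul_nonsing_inv _ (isUnit_iff_ne_zero.2 hdet),
      Matrix.mul_one]
  convert HasMatDerivAt.smul hm.hasDerivAt_det_of_mul (hu.mul hu.transpose) using 1
  simp only [Matrix.transpose_neg, Matrix.transpose_mul, Matrix.neg_mul, Matrix.mul_neg,
    Matrix.mul_add, Matrix.add_mul, Matrix.mul_assoc, smul_sub, mul_smul]
  module

theorem deriv_deriv_det_smul_inv_mul_inv_transpose_apply {m B : 𝕜 → Matrix n n 𝕜}
    {B' : Matrix n n 𝕜} (hm : ∀ t, HasMatDerivAt m (B t * m t) t) (hm0 : m 0 = 1)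
    (hB : HasMatDerivAt B B' 0) (i j : n) :
    deriv (deriv fun t => ((m t).det • ((m t)⁻¹ * (m t)⁻¹ᵀ)) i j) 0 =
      ((trace (B 0) ^ 2 + trace B') • 1 + 2 • (B 0 * (B 0)ᵀ) + B 0 * B 0 + (B 0)ᵀ * (B 0)ᵀ
        - (B' + B'ᵀ) - (2 * trace (B 0)) • (B 0 + (B 0)ᵀ) : Matrix n n 𝕜) i j := by
  have hdet0 : (m 0).det ≠ 0 := by simp [hm0]
  have hderiv : deriv (fun t => ((m t).det • ((m t)⁻¹ * (m t)⁻¹ᵀ)) i j) =ᶠ[𝓝 0]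
      fun t => ((m t).det • (trace (B t) • ((m t)⁻¹ * (m t)⁻¹ᵀ)
        - (m t)⁻¹ * (B t + (B t)ᵀ) * (m t)⁻¹ᵀ)) i j :=
    ((hm 0).hasDerivAt_det.continuousAt.eventually_ne hdet0).mono fun t ht =>
      ((hm t).det_smul_inv_mul_inv_transpose ht i j).deriv
  have hu := (hm 0).inv hdet0
  have hG := HasMatDerivAt.smul (hm 0).hasDerivAt_det_of_mul
    ((HasMatDerivAt.smul hB.hasDerivAt_trace (hu.mul hu.transpose)).sub
      ((hu.mul (hB.add hB.transpose)).mul hu.transpose))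
  rw [hderiv.deriv_eq, (hG i j).deriv]
  refine congrArg (fun M : Matrix n n 𝕜 => M i j) ?_
  simp only [hm0, inv_one, det_one, transpose_one, transpose_neg, neg_mul, mul_neg, mul_add,
    add_mul, mul_one, one_mul, one_smul]
  module

end MatrixCalculus

section Flow

variable {E : Type*} [NormedAddCommGroup E] [NormedSpace ℝ E]

theorem hasDerivAt_fderiv_flow {η : E → E} (hη : Differentiable ℝ η) {Φ : ℝ → E → E}
    (hΦ : ContDiff ℝ 2 fun p : ℝ × E => Φ p.1 p.2)
    (hΦt : ∀ t x, HasDerivAt (fun s => Φ s x) (η (Φ t x)) t) (t : ℝ) (x : E) :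
    HasDerivAt (fun s => fderiv ℝ (Φ s) x) ((fderiv ℝ η (Φ t x)).comp (fderiv ℝ (Φ t) x)) t := by
  set F : ℝ × E → E := fun p => Φ p.1 p.2
  have hF : Differentiable ℝ F := hΦ.differentiable (by norm_num)
  have hF' : Differentiable ℝ (fderiv ℝ F) :=
    (hΦ.fderiv_right (m := 1) (by norm_num)).differentiable (by norm_num)
  have hcurve : ∀ s (y : E), HasDerivAt (fun r : ℝ => (r, y)) (1, 0) s := fun s y =>
    (hasDerivAt_id s).prodMk (hasDerivAt_const s y)
  have hspace : ∀ s y, fderiv ℝ (Φ s) y = (fderiv ℝ F (s, y)).comp (.inr ℝ ℝ E) := fun s y =>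
    ((hF (s, y)).hasFDerivAt.comp y (hasFDerivAt_prodMk_right s y)).fderiv
  have htime : (fun p => fderiv ℝ F p (1, 0)) = η ∘ F := by
    ext1 ⟨s, y⟩
    have hcomp := (hF (s, y)).hasFDerivAt.comp_hasDerivAt s (hcurve s y)
    exact hcomp.unique (hΦt s y)
  -- `∂ₜ∂ₓF = ∂ₓ∂ₜF = ∂ₓ(η ∘ F)` by symmetry of the second derivative
  have hmixed : (fderiv ℝ (fderiv ℝ F) (t, x) (1, 0)).comp (.inr ℝ ℝ E) =
      (fderiv ℝ η (Φ t x)).comp (fderiv ℝ (Φ t) x) := by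
    have happly := ((ContinuousLinearMap.apply ℝ E ((1 : ℝ), (0 : E))).hasFDerivAt.comp (t, x)
      (hF' (t, x)).hasFDerivAt)
    rw [show (_ ∘ fderiv ℝ F) = fun p => fderiv ℝ F p (1, 0) from rfl, htime] at happly
    have hchain := happly.unique ((hη (F (t, x))).hasFDerivAt.comp (t, x) (hF (t, x)).hasFDerivAt)
    ext1 v
    rw [ContinuousLinearMap.comp_apply, second_derivative_symmetric (fun y => (hF y).hasFDerivAt)
      (hF' (t, x)).hasFDerivAt, hspace]
    exact congrArg (· ((0 : ℝ), v)) hchain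
  rw [funext fun s => hspace s x, ← hmixed]
  have hpartial : HasDerivAt (fun s => fderiv ℝ F (s, x))
      (fderiv ℝ (fderiv ℝ F) (t, x) (1, 0)) t :=
    (hF' (t, x)).hasFDerivAt.comp_hasDerivAt t (hcurve t x)
  simpa using hpartial.clm_comp (hasDerivAt_const t (ContinuousLinearMap.inr ℝ ℝ E))

end Flow

section Jacobian

variable {d : ℕ}

local notation "ℝᵈ" => EuclideanSpace ℝ (Fin d)

theorem toMatrix_basisFun_apply (L : ℝᵈ →L[ℝ] ℝᵈ) (i j : Fin d) :
    LinearMap.toMatrix (EuclideanSpace.basisFun (Fin d) ℝ).toBasis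
      (EuclideanSpace.basisFun (Fin d) ℝ).toBasis L i j = L (EuclideanSpace.single j 1) i := by
  simp [LinearMap.toMatrix_apply]

theorem jacMatrix_apply (f : ℝᵈ → ℝᵈ) (x : ℝᵈ) (i j : Fin d) :
    jacMatrix f x i j = fderiv ℝ f x (EuclideanSpace.single j 1) i :=
  toMatrix_basisFun_apply _ i j

theorem jacMatrix_id (x : ℝᵈ) : jacMatrix (fun y => y) x = 1 := by
  rw [jacMatrix, fderiv_fun_id, ContinuousLinearMap.coe_id, LinearMap.toMatrix_id]

theorem vdiv_eq_trace (η : ℝᵈ → ℝᵈ) (x : ℝᵈ) : vdiv η x = trace (jacMatrix η x) :=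
  LinearMap.trace_eq_matrix_trace ℝ (EuclideanSpace.basisFun (Fin d) ℝ).toBasis _

theorem differentiable_jacMatrix_apply {η : ℝᵈ → ℝᵈ} (hη : ContDiff ℝ 2 η) (i j : Fin d) :
    Differentiable ℝ fun y => jacMatrix η y i j := by
  simp only [jacMatrix_apply]
  exact ((EuclideanSpace.proj i).comp (ContinuousLinearMap.apply ℝ ℝᵈ
    (EuclideanSpace.single j 1))).differentiable.comp
      ((hη.fderiv_right (m := 1) (by norm_num)).differentiable (by norm_num))

theorem hasMatDerivAt_jacMatrix {f : ℝ → ℝᵈ → ℝᵈ} {x : ℝᵈ} {L : ℝᵈ →L[ℝ] ℝᵈ} {t : ℝ}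
    (h : HasDerivAt (fun s => fderiv ℝ (f s) x) L t) :
    HasMatDerivAt (fun s => jacMatrix (f s) x)
      (LinearMap.toMatrix (EuclideanSpace.basisFun (Fin d) ℝ).toBasis
        (EuclideanSpace.basisFun (Fin d) ℝ).toBasis L) t := fun i j => by
  simp only [jacMatrix_apply, toMatrix_basisFun_apply]
  exact ((EuclideanSpace.proj i).comp (ContinuousLinearMap.apply ℝ ℝᵈ
    (EuclideanSpace.single j 1))).hasFDerivAt.comp_hasDerivAt t h

theorem hasMatDerivAt_jacMatrix_flow {η : ℝᵈ → ℝᵈ} (hη : Differentiable ℝ η) {Φ : ℝ → ℝᵈ → ℝᵈ}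
    (hΦ : ContDiff ℝ 2 fun p : ℝ × ℝᵈ => Φ p.1 p.2)
    (hΦt : ∀ t x, HasDerivAt (fun s => Φ s x) (η (Φ t x)) t) (x : ℝᵈ) (t : ℝ) :
    HasMatDerivAt (fun s => jacMatrix (Φ s) x) (jacMatrix η (Φ t x) * jacMatrix (Φ t) x) t := by
  convert hasMatDerivAt_jacMatrix (hasDerivAt_fderiv_flow hη hΦ hΦt t x) using 1
  rw [jacMatrix, jacMatrix, ← LinearMap.toMatrix_comp]
  rfl

theorem hasMatDerivAt_comp_integralCurve {η : ℝᵈ → ℝᵈ} {M : ℝᵈ → Matrix (Fin d) (Fin d) ℝ}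
    {γ : ℝ → ℝᵈ} {t : ℝ} (hM : ∀ i j, DifferentiableAt ℝ (fun y => M y i j) (γ t))
    (hγ : HasDerivAt γ (η (γ t)) t) :
    HasMatDerivAt (fun s => M (γ s)) (dirDerivMat η M (γ t)) t :=
  fun i j => (hM i j).hasFDerivAt.comp_hasDerivAt t hγ

theorem dirDerivMat_add {η : ℝᵈ → ℝᵈ} {M N : ℝᵈ → Matrix (Fin d) (Fin d) ℝ} {x : ℝᵈ}
    (hM : ∀ i j, DifferentiableAt ℝ (fun y => M y i j) x)
    (hN : ∀ i j, DifferentiableAt ℝ (fun y => N y i j) x) :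
    dirDerivMat η (fun y => M y + N y) x = dirDerivMat η M x + dirDerivMat η N x := by
  ext i j
  simp [dirDerivMat, fderiv_fun_add (hM i j) (hN i j)]

theorem dirDerivMat_transpose (η : ℝᵈ → ℝᵈ) (M : ℝᵈ → Matrix (Fin d) (Fin d) ℝ) (x : ℝᵈ) :
    dirDerivMat η (fun y => (M y)ᵀ) x = (dirDerivMat η M x)ᵀ :=
  rfl

theorem inner_gradient_vdiv {η : ℝᵈ → ℝᵈ} (hη : ContDiff ℝ 2 η) (x : ℝᵈ) :
    ⟪η x, gradient (vdiv η) x⟫ = trace (dirDerivMat η (jacMatrix η) x) := by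
  have hdiv : HasFDerivAt (vdiv η) (∑ i, fderiv ℝ (fun y => jacMatrix η y i i) x) x := by
    simp only [funext (vdiv_eq_trace η), trace, diag]
    exact HasFDerivAt.fun_sum fun i _ =>
      (differentiable_jacMatrix_apply hη i i x).hasFDerivAt
  rw [real_inner_comm, gradient, InnerProductSpace.toDual_symm_apply, hdiv.fderiv]
  simp [trace, dirDerivMat]

end Jacobian

theorem two_smul_delta2A {d : ℕ} {η : EuclideanSpace ℝ (Fin d) → EuclideanSpace ℝ (Fin d)}
    (hη : ContDiff ℝ 2 η) (x : EuclideanSpace ℝ (Fin d)) :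
    (2 : ℝ) • delta2A η x =
      (trace (jacMatrix η x) ^ 2 + trace (dirDerivMat η (jacMatrix η) x)) • 1
        + 2 • (jacMatrix η x * (jacMatrix η x)ᵀ) + jacMatrix η x * jacMatrix η x
        + (jacMatrix η x)ᵀ * (jacMatrix η x)ᵀ
        - (dirDerivMat η (jacMatrix η) x + (dirDerivMat η (jacMatrix η) x)ᵀ)
        - (2 * trace (jacMatrix η x)) • (jacMatrix η x + (jacMatrix η x)ᵀ) := by
  have hJ := fun i j => differentiable_jacMatrix_apply hη i j x
  rw [delta2A, dirDerivMat_add (M := fun y => (jacMatrix η y)ᵀ) (fun i j => hJ j i) hJ,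
    dirDerivMat_transpose, inner_gradient_vdiv hη, vdiv_eq_trace]
  module

theorem stmt_11_general {d : ℕ}
    (η : EuclideanSpace ℝ (Fin d) → EuclideanSpace ℝ (Fin d))
    (hη : ContDiff ℝ (⊤ : ℕ∞) η)
    (Φ : ℝ → EuclideanSpace ℝ (Fin d) → EuclideanSpace ℝ (Fin d))
    (hΦ : ContDiff ℝ (⊤ : ℕ∞) (fun p : ℝ × EuclideanSpace ℝ (Fin d) => Φ p.1 p.2))
    (hΦ0 : ∀ x, Φ 0 x = x)
    (hΦt : ∀ t x, HasDerivAt (fun s => Φ s x) (η (Φ t x)) t)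
    (A : ℝ → EuclideanSpace ℝ (Fin d) → Matrix (Fin d) (Fin d) ℝ)
    (hA : ∀ t x, A t x =
      ((jacMatrix (Φ t) x).det) •
        ((jacMatrix (Φ t) x)⁻¹ * ((jacMatrix (Φ t) x)⁻¹)ᵀ)) :
    ∀ x, ∀ i j : Fin d,
      deriv (deriv (fun t : ℝ => A t x i j)) 0 = 2 * delta2A η x i j := by
  intro x i j
  have hη2 : ContDiff ℝ 2 η := hη.of_le (by norm_cast)
  have hm := hasMatDerivAt_jacMatrix_flow (hη2.differentiable (by norm_num))
    (hΦ.of_le (by norm_cast)) hΦt x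
  have hm0 : jacMatrix (Φ 0) x = 1 := by
    rw [show Φ 0 = fun y => y from funext hΦ0, jacMatrix_id]
  have hB : HasMatDerivAt (fun t => jacMatrix η (Φ t x)) (dirDerivMat η (jacMatrix η) x) 0 := by
    simpa only [hΦ0] using hasMatDerivAt_comp_integralCurve
      (fun i j => differentiable_jacMatrix_apply hη2 i j (Φ 0 x)) (hΦt 0 x)
  simp only [hA]
  rw [deriv_deriv_det_smul_inv_mul_inv_transpose_apply hm hm0 hB, hΦ0, ← two_smul_delta2A hη2,
    Matrix.smul_apply, smul_eq_mul]

theorem stmt_11 {d : ℕ}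
    (η : EuclideanSpace ℝ (Fin d) → EuclideanSpace ℝ (Fin d))
    (hη : ContDiff ℝ (⊤ : ℕ∞) η) (hηc : HasCompactSupport η)
    (Φ : ℝ → EuclideanSpace ℝ (Fin d) → EuclideanSpace ℝ (Fin d))
    (hΦ : ContDiff ℝ (⊤ : ℕ∞) (fun p : ℝ × EuclideanSpace ℝ (Fin d) => Φ p.1 p.2))
    (hΦ0 : ∀ x, Φ 0 x = x)
    (hΦt : ∀ t x, HasDerivAt (fun s => Φ s x) (η (Φ t x)) t)
    (A : ℝ → EuclideanSpace ℝ (Fin d) → Matrix (Fin d) (Fin d) ℝ)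
    (hA : ∀ t x, A t x =
      ((jacMatrix (Φ t) x).det) •
        ((jacMatrix (Φ t) x)⁻¹ * ((jacMatrix (Φ t) x)⁻¹)ᵀ)) :
    ∀ x, ∀ i j : Fin d,
      deriv (deriv (fun t : ℝ => A t x i j)) 0 = 2 * delta2A η x i j :=
  stmt_11_general η hη Φ hΦ hΦ0 hΦt A hA
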